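/- (Conditional probability given one tie, Lemma C.6.) Fix Y ∈ ℤ with f(Y) > 0 and an integer D ≥ 2, and write F^{(a,m)}(y) = ∑_{t=a}^{m} (m choose t) F(y)^t (1−F(y))^{m−t}. Then: (i) for 1 < r < D, P(os_r(Z) = Y ∧ Z_1 = Y) = f(Y) · (F^{(r−1, D−1)}(Y) − F^{(r, D−1)}(Y−1)); (ii) for r = D, P(os_D(Z) = Y ∧ Z_1 = Y) = f(Y) · F^{(D−1, D−1)}(Y); (iii) for r = 1, P(os_1(Z) = Y ∧ Z_1 = Y) = f(Y) · (1 − F^{(1, D−1)}(Y−1)). Equivalently, dividing by P(Z_1 = Y) = f(Y) > 0 gives the corresponding conditional probabilities P(os_r(Z) = Y | Z_1 = Y). -/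

import Mathlib

open MeasureTheory

/-- The measure on ℤ with mass function `f`. -/
noncomputable def parentMeasure (f : ℤ → ℝ) : Measure ℤ :=
  Measure.count.withDensity fun z => ENNReal.ofReal (f z)

/-- `P f D S` is the probability of the event `S` under the `D`-fold product of the
measure on ℤ with pmf `f`, i.e. the law of `D` i.i.d. draws `Z = (Z_1, …, Z_D)` from `f`. -/
noncomputable def P (f : ℤ → ℝ) (D : ℕ) (S : Set (Fin D → ℤ)) : ℝ :=
  (Measure.pi (fun _ : Fin D => parentMeasure f) S).toReal

/-- The CDF of `f`: `F(y) = ∑_{t ≤ y} f(t)`. -/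
noncomputable def Fcdf (f : ℤ → ℝ) (y : ℤ) : ℝ := ∑' z : {t : ℤ // t ≤ y}, f z.1

/-- The number of entries of `z` that are `≤ y`. -/
def countLe {n : ℕ} (z : Fin n → ℤ) (y : ℤ) : ℕ :=
  (Finset.univ.filter fun i => z i ≤ y).card

/-- `osEq r z Y` says that the `r`-th smallest entry of `z` (counting multiplicity)
equals `Y`: the `r`-th order statistic is `≤ Y` but not `≤ Y - 1`. -/
def osEq {n : ℕ} (r : ℕ) (z : Fin n → ℤ) (Y : ℤ) : Prop :=
  r ≤ countLe z Y ∧ countLe z (Y - 1) < r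

/-- The order-statistic CDF `F^{(a,m)}(y) = ∑_{t=a}^{m} (m choose t) F(y)^t (1−F(y))^{m−t}`. -/
noncomputable def osCDF (f : ℤ → ℝ) (a m : ℕ) (y : ℤ) : ℝ :=
  ∑ t ∈ Finset.Icc a m, (m.choose t : ℝ) * Fcdf f y ^ t * (1 - Fcdf f y) ^ (m - t)

/-! Splitting off the first coordinate, `os_r(Z) = Y ∧ Z_1 = Y` becomes `Z_1 = Y` together with an
event about the other `D - 1` coordinates: at least `r - 1` of them are `≤ Y`, and fewer than `r`
of them are `≤ Y - 1`. The number of i.i.d. coordinates falling in a set of mass `q` is binomial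
with parameter `q`, so these conditions have probabilities `F^{(r-1,D-1)}(Y)` and
`F^{(r,D-1)}(Y-1)`; the second event implies the first, whence the difference. The cases `r = D`
and `r = 1` are the degenerate tails `F^{(D,D-1)} = 0` and `F^{(0,D-1)} = 1`. -/

open Finset

section BinomialCount

lemma setOf_filter_eq_eq_univ_pi {α : Type*} {p : α → Prop} [DecidablePred p] {m : ℕ}
    (S : Finset (Fin m)) :
    {z : Fin m → α | univ.filter (fun i => p (z i)) = S}
      = Set.univ.pi fun i => if i ∈ S then {x | p x} else {x | ¬p x} := by
  ext z
  simp only [Finset.ext_iff, Finset.mem_filter, Finset.mem_univ, true_and, Set.mem_ofPred_eq,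
    Set.mem_univ_pi]
  refine forall_congr' fun i => ?_
  by_cases hi : i ∈ S <;> simp [hi]

variable {α : Type*} [MeasurableSpace α] (μ : Measure α) [SigmaFinite μ]
  {p : α → Prop} [DecidablePred p] {m : ℕ}

lemma measure_pi_filter_eq (S : Finset (Fin m)) :
    Measure.pi (fun _ => μ) {z : Fin m → α | univ.filter (fun i => p (z i)) = S}
      = μ {x | p x} ^ #S * μ {x | ¬p x} ^ (m - #S) := by
  rw [setOf_filter_eq_eq_univ_pi, Measure.pi_pi]
  simp only [apply_ite μ]
  rw [Finset.prod_ite, Finset.prod_const, Finset.prod_const, Finset.filter_mem_eq_inter,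
    Finset.univ_inter, Finset.filter_not, Finset.filter_mem_eq_inter, Finset.univ_inter,
    Finset.card_sdiff_of_subset S.subset_univ, Finset.card_univ, Fintype.card_fin]

lemma measurable_card_filter (hp : MeasurableSet {x | p x}) :
    Measurable fun z : Fin m → α => #{i | p (z i)} := by
  simp_rw [Finset.card_filter]
  exact Finset.measurable_sum _ fun i _ =>
    Measurable.ite (hp.preimage (measurable_pi_apply i)) measurable_const measurable_const

lemma measure_pi_card_filter_eq (hp : MeasurableSet {x | p x}) (t : ℕ) :
    Measure.pi (fun _ => μ) {z : Fin m → α | #{i | p (z i)} = t}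
      = m.choose t * μ {x | p x} ^ t * μ {x | ¬p x} ^ (m - t) := by
  have hunion : {z : Fin m → α | #{i | p (z i)} = t}
      = ⋃ S ∈ powersetCard t (univ : Finset (Fin m)),
          {z | univ.filter (fun i => p (z i)) = S} := by
    ext z
    simp [Finset.mem_powersetCard]
  rw [hunion, measure_biUnion_finset]
  · rw [Finset.sum_congr rfl fun S hS => by
      rw [measure_pi_filter_eq μ, (Finset.mem_powersetCard.mp hS).2]]
    rw [Finset.sum_const, Finset.card_powersetCard, Finset.card_univ, Fintype.card_fin,
      nsmul_eq_mul, mul_assoc]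
  · intro S _ T _ hST
    exact Set.disjoint_left.mpr fun z hS hT => hST (hS.symm.trans hT)
  · intro S _
    rw [setOf_filter_eq_eq_univ_pi]
    exact MeasurableSet.univ_pi fun i => by split_ifs; exacts [hp, hp.compl]

lemma measure_pi_le_card_filter (hp : MeasurableSet {x | p x}) (k : ℕ) :
    Measure.pi (fun _ => μ) {z : Fin m → α | k ≤ #{i | p (z i)}}
      = ∑ t ∈ Icc k m, m.choose t * μ {x | p x} ^ t * μ {x | ¬p x} ^ (m - t) := by
  have hunion : {z : Fin m → α | k ≤ #{i | p (z i)}}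
      = ⋃ t ∈ Icc k m, {z | #{i | p (z i)} = t} := by
    ext z
    have := (card_filter_le univ fun i => p (z i)).trans_eq (card_fin m)
    simp only [Set.mem_ofPred_eq, Set.mem_iUnion, Finset.mem_Icc, exists_prop, exists_eq_right']
    tauto
  rw [hunion, measure_biUnion_finset]
  · exact Finset.sum_congr rfl fun t _ => measure_pi_card_filter_eq μ hp t
  · intro s _ t _ hst
    exact Set.disjoint_left.mpr fun z hs ht => hst (hs.symm.trans ht)
  · exact fun t _ => measurable_card_filter hp (measurableSet_singleton t)

end BinomialCount

section ParentMeasure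

variable {f : ℤ → ℝ}

lemma parentMeasure_apply (S : Set ℤ) :
    parentMeasure f S = ∑' z : S, ENNReal.ofReal (f z) := by
  rw [parentMeasure, withDensity_apply _ S.to_countable.measurableSet,
    ← lintegral_indicator S.to_countable.measurableSet, lintegral_count, ← _root_.tsum_subtype]

lemma parentMeasure_singleton (y : ℤ) :
    parentMeasure f {y} = ENNReal.ofReal (f y) := by
  rw [parentMeasure_apply, tsum_singleton y fun z => ENNReal.ofReal (f z)]

lemma isProbabilityMeasure_parentMeasure (hf0 : ∀ z, 0 ≤ f z) (hf1 : HasSum f 1) :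
    IsProbabilityMeasure (parentMeasure f) := by
  constructor
  rw [parentMeasure_apply, tsum_univ fun z => ENNReal.ofReal (f z),
    ← ENNReal.ofReal_tsum_of_nonneg hf0 hf1.summable, hf1.tsum_eq, ENNReal.ofReal_one]

lemma parentMeasure_le (hf0 : ∀ z, 0 ≤ f z) (hf : Summable f) (y : ℤ) :
    parentMeasure f {x | x ≤ y} = ENNReal.ofReal (Fcdf f y) := by
  rw [parentMeasure_apply]
  exact (ENNReal.ofReal_tsum_of_nonneg (f := fun z : {x // x ≤ y} => f z) (fun z => hf0 z)
    (hf.subtype _)).symm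

lemma Fcdf_nonneg (hf0 : ∀ z, 0 ≤ f z) (y : ℤ) : 0 ≤ Fcdf f y :=
  tsum_nonneg fun z => hf0 z.1

lemma Fcdf_le_one (hf0 : ∀ z, 0 ≤ f z) (hf1 : HasSum f 1) (y : ℤ) : Fcdf f y ≤ 1 := by
  have := isProbabilityMeasure_parentMeasure hf0 hf1
  have h := prob_le_one (μ := parentMeasure f) (s := {x | x ≤ y})
  rwa [parentMeasure_le hf0 hf1.summable, ENNReal.ofReal_le_one] at h

lemma parentMeasure_not_le (hf0 : ∀ z, 0 ≤ f z) (hf1 : HasSum f 1) (y : ℤ) :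
    parentMeasure f {x | ¬x ≤ y} = ENNReal.ofReal (1 - Fcdf f y) := by
  have := isProbabilityMeasure_parentMeasure hf0 hf1
  rw [← Set.compl_ofPred, prob_compl_eq_one_sub (Set.to_countable _).measurableSet,
    parentMeasure_le hf0 hf1.summable, ← ENNReal.ofReal_one,
    ← ENNReal.ofReal_sub _ (Fcdf_nonneg hf0 y)]

lemma osCDF_nonneg (hf0 : ∀ z, 0 ≤ f z) (hf1 : HasSum f 1) (a m : ℕ) (y : ℤ) :
    0 ≤ osCDF f a m y := by
  have := Fcdf_nonneg hf0 y
  have := Fcdf_le_one hf0 hf1 y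
  exact Finset.sum_nonneg fun t _ => by positivity

lemma osCDF_zero (m : ℕ) (y : ℤ) : osCDF f 0 m y = 1 := by
  have h := (add_pow (Fcdf f y) (1 - Fcdf f y) m).symm
  rw [add_sub_cancel, one_pow, Nat.range_succ_eq_Icc_zero] at h
  exact (Finset.sum_congr rfl fun t _ => by ring).trans h

lemma osCDF_of_lt {a m : ℕ} (h : m < a) (y : ℤ) : osCDF f a m y = 0 := by
  rw [osCDF, Finset.Icc_eq_empty_of_lt h, Finset.sum_empty]

lemma measure_pi_le_countLe (hf0 : ∀ z, 0 ≤ f z) (hf1 : HasSum f 1) (m k : ℕ) (y : ℤ) :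
    Measure.pi (fun _ => parentMeasure f) {z : Fin m → ℤ | k ≤ countLe z y}
      = ENNReal.ofReal (osCDF f k m y) := by
  have := isProbabilityMeasure_parentMeasure hf0 hf1
  have hF := Fcdf_nonneg hf0 y
  have hF' : 0 ≤ 1 - Fcdf f y := sub_nonneg.mpr (Fcdf_le_one hf0 hf1 y)
  unfold countLe
  rw [measure_pi_le_card_filter (p := (· ≤ y)) _ (Set.to_countable _).measurableSet,
    parentMeasure_le hf0 hf1.summable, parentMeasure_not_le hf0 hf1, osCDF,
    ENNReal.ofReal_sum_of_nonneg fun t _ => by positivity]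
  refine Finset.sum_congr rfl fun t _ => ?_
  rw [ENNReal.ofReal_mul (by positivity), ENNReal.ofReal_mul (by positivity),
    ENNReal.ofReal_pow hF, ENNReal.ofReal_pow hF', ENNReal.ofReal_natCast]

end ParentMeasure

lemma countLe_cons {m : ℕ} (x : ℤ) (z : Fin m → ℤ) (y : ℤ) :
    countLe (Fin.cons x z : Fin (m + 1) → ℤ) y = (if x ≤ y then 1 else 0) + countLe z y := by
  simp only [countLe, Fin.card_filter_univ_succ', Fin.cons_zero, Fin.cons_succ]

lemma countLe_mono {m : ℕ} (z : Fin m → ℤ) {y y' : ℤ} (h : y ≤ y') :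
    countLe z y ≤ countLe z y' :=
  Finset.card_le_card <| Finset.monotone_filter_right _ fun _ _ hx => hx.trans h

lemma osEq_cons_self_iff {m : ℕ} (r : ℕ) (z : Fin m → ℤ) (Y : ℤ) :
    osEq r (Fin.cons Y z : Fin (m + 1) → ℤ) Y ↔ r - 1 ≤ countLe z Y ∧ countLe z (Y - 1) < r := by
  simp only [osEq, countLe_cons, le_refl, if_true, show ¬Y ≤ Y - 1 by omega, if_false]
  omega

lemma measure_pi_fin_succ_eq_mul {α : Type*} [MeasurableSpace α] (μ : Measure α) [SigmaFinite μ]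
    {m : ℕ} {s : Set α} (hs : MeasurableSet s) {B : Set (Fin m → α)} (hB : MeasurableSet B) :
    Measure.pi (fun _ => μ) {ω : Fin (m + 1) → α | ω 0 ∈ s ∧ Fin.tail ω ∈ B}
      = μ s * Measure.pi (fun _ => μ) B := by
  have hpre : {ω : Fin (m + 1) → α | ω 0 ∈ s ∧ Fin.tail ω ∈ B}
      = MeasurableEquiv.piFinSuccAbove (fun _ => α) 0 ⁻¹' s ×ˢ B := rfl
  rw [hpre, (measurePreserving_piFinSuccAbove (fun _ => μ) 0).measure_preimage
    (hs.prod hB).nullMeasurableSet, Measure.prod_prod]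

lemma P_osEq_and_apply_zero (f : ℤ → ℝ) (hf0 : ∀ z, 0 ≤ f z) (hf1 : HasSum f 1)
    (Y : ℤ) (m r : ℕ) :
    P f (m + 1) {ω | osEq r ω Y ∧ ω 0 = Y}
      = f Y * (osCDF f (r - 1) m Y - osCDF f r m (Y - 1)) := by
  have := isProbabilityMeasure_parentMeasure hf0 hf1
  have hsub : {z : Fin m → ℤ | r ≤ countLe z (Y - 1)} ⊆ {z | r - 1 ≤ countLe z Y} :=
    fun z hz => (Nat.sub_le r 1).trans (hz.trans (countLe_mono z (by omega)))
  have hevent : {ω : Fin (m + 1) → ℤ | osEq r ω Y ∧ ω 0 = Y}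
      = {ω : Fin (m + 1) → ℤ | ω 0 ∈ ({Y} : Set ℤ) ∧
          Fin.tail ω ∈ {z | r - 1 ≤ countLe z Y} \ {z | r ≤ countLe z (Y - 1)}} := by
    ext ω
    rw [← Fin.cons_self_tail ω]
    simp only [Set.mem_ofPred_eq, Set.mem_singleton_iff, Set.mem_sdiff, Fin.cons_zero,
      Fin.tail_cons, not_le]
    constructor
    · rintro ⟨h, rfl⟩
      exact ⟨rfl, (osEq_cons_self_iff r _ _).mp h⟩
    · rintro ⟨rfl, h⟩
      exact ⟨(osEq_cons_self_iff r _ _).mpr h, rfl⟩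
  have hle : osCDF f r m (Y - 1) ≤ osCDF f (r - 1) m Y := by
    have := measure_mono (μ := Measure.pi fun _ => parentMeasure f) hsub
    rwa [measure_pi_le_countLe hf0 hf1, measure_pi_le_countLe hf0 hf1,
      ENNReal.ofReal_le_ofReal_iff (osCDF_nonneg hf0 hf1 _ _ _)] at this
  rw [P, hevent, measure_pi_fin_succ_eq_mul _ (Set.to_countable _).measurableSet
      (Set.to_countable _).measurableSet, parentMeasure_singleton,
    measure_sdiff hsub (Set.to_countable _).measurableSet.nullMeasurableSet (measure_ne_top _ _),
    measure_pi_le_countLe hf0 hf1, measure_pi_le_countLe hf0 hf1,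
    ← ENNReal.ofReal_sub _ (osCDF_nonneg hf0 hf1 _ _ _), ← ENNReal.ofReal_mul (hf0 Y),
    ENNReal.toReal_ofReal (mul_nonneg (hf0 Y) (sub_nonneg.mpr hle))]

/-- **Lemma C.6** (conditional probability given one tie): for `Y` with `f(Y) > 0` and
`D ≥ 2`:
(i) for `1 < r < D`, `P(os_r(Z) = Y ∧ Z_1 = Y) = f(Y)·(F^{(r−1,D−1)}(Y) − F^{(r,D−1)}(Y−1))`;
(ii) for `r = D`, `P(os_D(Z) = Y ∧ Z_1 = Y) = f(Y)·F^{(D−1,D−1)}(Y)`;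
(iii) for `r = 1`, `P(os_1(Z) = Y ∧ Z_1 = Y) = f(Y)·(1 − F^{(1,D−1)}(Y−1))`.
Dividing by `P(Z_1 = Y) = f(Y) > 0` gives the corresponding conditional probabilities. -/
theorem conditional_probability_one_tie
    (f : ℤ → ℝ) (hf0 : ∀ z, 0 ≤ f z) (hf1 : HasSum f 1)
    (Y : ℤ) (D : ℕ) (hD : 2 ≤ D) (r : ℕ) :
    ((1 < r ∧ r < D) →
      P f D {ω | osEq r ω Y ∧ ω ⟨0, by omega⟩ = Y}
        = f Y * (osCDF f (r - 1) (D - 1) Y - osCDF f r (D - 1) (Y - 1))) ∧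
    (r = D →
      P f D {ω | osEq D ω Y ∧ ω ⟨0, by omega⟩ = Y}
        = f Y * osCDF f (D - 1) (D - 1) Y) ∧
    (r = 1 →
      P f D {ω | osEq 1 ω Y ∧ ω ⟨0, by omega⟩ = Y}
        = f Y * (1 - osCDF f 1 (D - 1) (Y - 1))) := by
  obtain ⟨m, rfl⟩ : ∃ m, D = m + 1 := ⟨D - 1, by omega⟩
  have key := P_osEq_and_apply_zero f hf0 hf1 Y m
  simp only [Nat.add_sub_cancel]
  refine ⟨fun _ => key r, fun _ => ?_, fun _ => ?_⟩
  · exact (key (m + 1)).trans <| by rw [Nat.add_sub_cancel, osCDF_of_lt m.lt_succ_self, sub_zero]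
  · exact (key 1).trans <| by rw [Nat.sub_self, osCDF_zero]
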